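/- Let β_SR, β_RR, β_LI, β_SDn, β_RDn > 0, and let ρ_SR, ρ_SDn, ρ_RDn, ρ_LI, V be independent exponential random variables with means β_SR, β_SDn, β_RDn, β_LI, β_RR respectively; set ρ_RR = V². Let γ_c, γ_r > 0, δ ∈ (0,1], ω ∈ {0,1}, and 0 < a_n < a_f with a_n + a_f = 1, and let γ_thf, γ_thn > 0 satisfy a_f > a_n·γ_thf. With I = ρ_RR·δ·γ_r + ρ_LI·ω·γ_r + 1, define γ₁ = a_f·ρ_SR·γ_c/(a_n·ρ_SR·γ_c + I), γ₂ = a_n·ρ_SR·γ_c/I, γ₃ = a_f·ρ_SDn·γ_c/(a_n·ρ_SDn·γ_c + 1), γ₄ = a_n·ρ_SDn·γ_c, γ₅ = a_f·ρ_RDn·γ_r/(a_n·ρ_RDn·γ_r + 1), γ₆ = a_n·ρ_RDn·γ_r. Set θ₁ = γ_thf/((a_f − a_n·γ_thf)γ_c), θ₂ = γ_thn/(a_n·γ_c), θ = max(θ₁,θ₂), φ₁ = γ_thf/((a_f − a_n·γ_thf)γ_r), φ₂ = γ_thn/(a_n·γ_r), φ = max(φ₁,φ₂). Then P(min(γ₁/γ_thf,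 γ₂/γ_thn) < 1 and min(γ₃/γ_thf, γ₄/γ_thn) < 1) + P(min(γ₁/γ_thf, γ₂/γ_thn) ≥ 1 and min(γ₅/γ_thf, γ₆/γ_thn) < 1 and min(γ₃/γ_thf, γ₄/γ_thn) < 1) = (1 − exp(−θ/β_SDn)) · { 1 − [β_SR/(2β_RR(β_SR + β_LI·ω·γ_r·θ))] · √(πβ_SR/(δ·γ_r·θ)) · exp(β_SR/(4β_RR²·δ·γ_r·θ) − θ/β_SR − φ/β_RDn) · erfc((1/(2β_RR))·√(β_SR/(δ·γ_r·θ))) }, where erfc(z) = (2/√π)·∫_z^∞ exp(−t²) dt. -/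

import Mathlib

open MeasureTheory ProbabilityTheory Real

/-- The complementary error function `erfc(z) = (2/√π)·∫_z^∞ exp(−t²) dt`. -/
noncomputable def erfc (z : ℝ) : ℝ :=
  2 / Real.sqrt π * ∫ t in Set.Ioi z, Real.exp (-t ^ 2)

/-!
Each SINR is increasing in its channel gain, so each outage condition
`min (γᵢ / γ_thf) (γⱼ / γ_thn) < 1` is a threshold condition on a single gain: `ρ_SR < θ I` at
the relay, `ρ_SDn < θ` on the direct link and `ρ_RDn < φ` on the relay link. By independence the
outage probability is `P(ρ_SDn < θ) (1 - P(ρ_SR ≥ θ I) P(ρ_RDn ≥ φ))`. Conditioning on `I`,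
`P(ρ_SR ≥ θ I) = E[exp (-θ I / β_SR)]`, which factors over the independent gains `ρ_LI` and `V`
into the Laplace transform `β_SR / (β_SR + β_LI w γ_r θ)` of an exponential law and
`E[exp (-c V²)]`; completing the square turns the latter into an `erfc`.
-/

open Set

lemma erfc_nonneg (z : ℝ) : 0 ≤ erfc z :=
  mul_nonneg (by positivity) (setIntegral_nonneg measurableSet_Ioi fun _ _ => (exp_pos _).le)

lemma integral_Ioi_exp_neg_sq (z : ℝ) : ∫ t in Ioi z, exp (-t ^ 2) = √π / 2 * erfc z := by
  have : √π ≠ 0 := by positivity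
  rw [erfc]
  field_simp

lemma integral_Ioi_comp_add_right {E : Type*} [NormedAddCommGroup E] [NormedSpace ℝ E]
    (f : ℝ → E) (c a : ℝ) : ∫ x in Ioi c, f (x + a) = ∫ x in Ioi (c + a), f x := by
  have h := (measurableEmbedding_addRight a).setIntegral_map (μ := volume) f (Ioi (c + a))
  rw [map_add_right_eq_self, preimage_add_const_Ioi, add_sub_cancel_right] at h
  exact h.symm

lemma integral_Ioi_exp_neg_mul_mul_exp_neg_mul_sq (r : ℝ) {c : ℝ} (hc : 0 < c) :
    ∫ x in Ioi 0, exp (-(r * x)) * exp (-(c * x ^ 2))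
      = √π / (2 * √c) * exp (r ^ 2 / (4 * c)) * erfc (r / (2 * √c)) := by
  have hsc : 0 < √c := sqrt_pos.2 hc
  set a := r / (2 * √c)
  have hsquare (x : ℝ) : exp (-(r * x)) * exp (-(c * x ^ 2))
      = exp (r ^ 2 / (4 * c)) * exp (-(√c * x + a) ^ 2) := by
    rw [← exp_add, ← exp_add]
    congr 1
    simp only [a]
    field_simp
    rw [sq_sqrt hc.le]
    ring
  simp_rw [hsquare]
  rw [integral_const_mul, integral_comp_mul_left_Ioi (fun y => exp (-(y + a) ^ 2)) 0 hsc,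
    mul_zero, integral_Ioi_comp_add_right (fun y => exp (-y ^ 2)), zero_add,
    integral_Ioi_exp_neg_sq, smul_eq_mul]
  field_simp

lemma expMeasure_Iio_ae_eq_Iic (r x : ℝ) : (Iio x : Set ℝ) =ᵐ[expMeasure r] Iic x :=
  (withDensity_absolutelyContinuous _ _).ae_eq Iio_ae_eq_Iic

lemma expMeasure_real_Iio {r x : ℝ} (hr : 0 < r) (hx : 0 ≤ x) :
    (expMeasure r).real (Iio x) = 1 - exp (-(r * x)) := by
  have := isProbabilityMeasure_expMeasure hr
  rw [measureReal_congr (expMeasure_Iio_ae_eq_Iic r x), ← cdf_eq_real, cdf_expMeasure_eq hr,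
    if_pos hx]

lemma expMeasure_real_Ici {r x : ℝ} (hr : 0 < r) (hx : 0 ≤ x) :
    (expMeasure r).real (Ici x) = exp (-(r * x)) := by
  have := isProbabilityMeasure_expMeasure hr
  rw [← compl_Iio, probReal_compl_eq_one_sub measurableSet_Iio, expMeasure_real_Iio hr hx,
    sub_sub_cancel]

lemma expMeasure_Ici {r x : ℝ} (hr : 0 < r) (hx : 0 ≤ x) :
    expMeasure r (Ici x) = ENNReal.ofReal (exp (-(r * x))) := by
  have := isProbabilityMeasure_expMeasure hr
  rw [← expMeasure_real_Ici hr hx, ofReal_measureReal]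

lemma ae_nonneg_expMeasure {r : ℝ} (hr : 0 < r) : ∀ᵐ x ∂expMeasure r, 0 ≤ x := by
  have := isProbabilityMeasure_expMeasure hr
  rw [ae_iff, ← measureReal_eq_zero_iff]
  simp only [not_le]
  change (expMeasure r).real (Iio 0) = 0
  simp [expMeasure_real_Iio hr le_rfl]

lemma lintegral_ofReal_expMeasure {r : ℝ} (hr : 0 < r) {f : ℝ → ℝ} (hf : Measurable f)
    (hf0 : ∀ x, 0 ≤ f x) (hf1 : ∀ x, 0 ≤ x → f x ≤ 1) :
    ∫⁻ x, ENNReal.ofReal (f x) ∂expMeasure r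
      = ENNReal.ofReal (∫ x in Ioi 0, r * exp (-(r * x)) * f x) := by
  have hdensity (x : ℝ) : exponentialPDF r x * ENNReal.ofReal (f x)
      = (Ici 0).indicator (fun x => ENNReal.ofReal (r * exp (-(r * x)) * f x)) x := by
    by_cases hx : 0 ≤ x
    · rw [indicator_of_mem (mem_Ici.2 hx), exponentialPDF_of_nonneg hx,
        ← ENNReal.ofReal_mul (by positivity)]
    · rw [indicator_of_notMem (mt mem_Ici.1 hx), exponentialPDF_of_neg (not_le.1 hx), zero_mul]
  have hint : IntegrableOn (fun x => r * exp (-(r * x)) * f x) (Ici 0) := by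
    refine Integrable.mono' ((integrableOn_Ici_iff_integrableOn_Ioi).mpr
      ((exp_neg_integrableOn_Ioi 0 hr).const_mul r)) (by fun_prop) ?_
    filter_upwards [self_mem_ae_restrict measurableSet_Ici] with x hx
    rw [norm_of_nonneg (by have := hf0 x; positivity), neg_mul]
    exact mul_le_of_le_one_right (by positivity) (hf1 x hx)
  rw [expMeasure, gammaMeasure, lintegral_withDensity_eq_lintegral_mul _
    (show Measurable (gammaPDF 1 r) from (measurable_gammaPDFReal 1 r).ennreal_ofReal)
    hf.ennreal_ofReal]
  simp only [Pi.mul_apply]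
  change ∫⁻ x, exponentialPDF r x * _ = _
  simp_rw [hdensity]
  rw [lintegral_indicator measurableSet_Ici, ← ofReal_integral_eq_lintegral_ofReal hint
    (ae_of_all _ fun x => by have := hf0 x; positivity), integral_Ici_eq_integral_Ioi]

lemma lintegral_exp_neg_mul_expMeasure {r c : ℝ} (hr : 0 < r) (hc : 0 ≤ c) :
    ∫⁻ x, ENNReal.ofReal (exp (-(c * x))) ∂expMeasure r = ENNReal.ofReal (r / (r + c)) := by
  rw [lintegral_ofReal_expMeasure hr (by fun_prop) (fun _ => (exp_pos _).le)
    fun x hx => exp_le_one_iff.2 (by nlinarith)]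
  congr 1
  calc ∫ x in Ioi 0, r * exp (-(r * x)) * exp (-(c * x))
      = r * ∫ x in Ioi 0, exp (-(r + c) * x) := by
        rw [← integral_const_mul]
        congr with x
        rw [mul_assoc, ← exp_add]
        ring_nf
    _ = r / (r + c) := by
        rw [integral_exp_mul_Ioi (by linarith), mul_zero, exp_zero]
        field_simp

lemma lintegral_exp_neg_mul_sq_expMeasure {r c : ℝ} (hr : 0 < r) (hc : 0 < c) :
    ∫⁻ x, ENNReal.ofReal (exp (-(c * x ^ 2))) ∂expMeasure r
      = ENNReal.ofReal (r * √π / (2 * √c) * exp (r ^ 2 / (4 * c)) * erfc (r / (2 * √c))) := by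
  rw [lintegral_ofReal_expMeasure hr (by fun_prop) (fun _ => (exp_pos _).le)
    fun x _ => exp_le_one_iff.2 (by nlinarith [sq_nonneg x])]
  simp_rw [mul_assoc r, integral_const_mul, integral_Ioi_exp_neg_mul_mul_exp_neg_mul_sq r hc]
  ring_nf

section Probability

variable {Ω : Type*} [MeasurableSpace Ω] {P : Measure Ω}

lemma ae_nonneg_of_map_eq_expMeasure {X : Ω → ℝ} (hX : Measurable X) {r : ℝ} (hr : 0 < r)
    (hlaw : P.map X = expMeasure r) : ∀ᵐ ω ∂P, 0 ≤ X ω :=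
  ae_of_ae_map hX.aemeasurable (hlaw ▸ ae_nonneg_expMeasure hr)

lemma measure_le_of_indepFun_of_map_eq_expMeasure [IsFiniteMeasure P] {α : Type*}
    [MeasurableSpace α] {X : Ω → α} {S : Ω → ℝ} (hX : Measurable X) (hS : Measurable S)
    (hXS : IndepFun X S P) {r : ℝ} (hr : 0 < r) (hlaw : P.map S = expMeasure r)
    {g : α → ℝ} (hg : Measurable g) (hg0 : ∀ᵐ ω ∂P, 0 ≤ g (X ω)) :
    P {ω | g (X ω) ≤ S ω} = ∫⁻ ω, ENNReal.ofReal (exp (-(r * g (X ω)))) ∂P := by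
  have := isProbabilityMeasure_expMeasure hr
  have hs : MeasurableSet {p : α × ℝ | g p.1 ≤ p.2} :=
    measurableSet_le (hg.comp measurable_fst) measurable_snd
  calc P {ω | g (X ω) ≤ S ω} = P.map (fun ω => (X ω, S ω)) {p | g p.1 ≤ p.2} :=
        (Measure.map_apply (hX.prodMk hS) hs).symm
    _ = ∫⁻ ω, expMeasure r (Ici (g (X ω))) ∂P := by
        rw [hXS.map_prod_eq_prod_map_map hX.aemeasurable hS.aemeasurable, hlaw,
          Measure.prod_apply hs, lintegral_map (measurable_measure_prodMk_left hs) hX]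
        rfl
    _ = _ := lintegral_congr_ae (hg0.mono fun ω h => expMeasure_Ici hr h)

lemma measureReal_add_mul_add_mul_sq_le [IsProbabilityMeasure P] {S L W : Ω → ℝ}
    (hS : Measurable S) (hL : Measurable L) (hW : Measurable W)
    (hLW_S : IndepFun (fun ω => (L ω, W ω)) S P) (hLW : IndepFun L W P)
    {r rL rW : ℝ} (hr : 0 < r) (hrL : 0 < rL) (hrW : 0 < rW)
    (hlawS : P.map S = expMeasure r) (hlawL : P.map L = expMeasure rL)
    (hlawW : P.map W = expMeasure rW) {c₀ a b : ℝ} (hc₀ : 0 ≤ c₀) (ha : 0 ≤ a) (hb : 0 < b) :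
    P.real {ω | c₀ + a * L ω + b * W ω ^ 2 ≤ S ω}
      = exp (-(r * c₀)) * (rL / (rL + r * a)) * (rW * √π / (2 * √(r * b))
          * exp (rW ^ 2 / (4 * (r * b))) * erfc (rW / (2 * √(r * b)))) := by
  have hL0 := ae_nonneg_of_map_eq_expMeasure hL hrL hlawL
  have hsplit (ω : Ω) : ENNReal.ofReal (exp (-(r * (c₀ + a * L ω + b * W ω ^ 2))))
      = ENNReal.ofReal (exp (-(r * c₀))) * (ENNReal.ofReal (exp (-(r * a * L ω)))
          * ENNReal.ofReal (exp (-(r * b * W ω ^ 2)))) := by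
    rw [← ENNReal.ofReal_mul (exp_pos _).le, ← ENNReal.ofReal_mul (exp_pos _).le, ← exp_add,
      ← exp_add]
    ring_nf
  rw [measureReal_def, measure_le_of_indepFun_of_map_eq_expMeasure (hL.prodMk hW) hS hLW_S hr
    hlawS (g := fun p => c₀ + a * p.1 + b * p.2 ^ 2) (by fun_prop)
    (hL0.mono fun ω h => by positivity)]
  simp_rw [hsplit]
  have hind : IndepFun (fun ω => ENNReal.ofReal (exp (-(r * a * L ω))))
      (fun ω => ENNReal.ofReal (exp (-(r * b * W ω ^ 2)))) P :=
    hLW.comp (φ := fun x => ENNReal.ofReal (exp (-(r * a * x))))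
      (ψ := fun x => ENNReal.ofReal (exp (-(r * b * x ^ 2)))) (by fun_prop) (by fun_prop)
  rw [lintegral_const_mul _ (by fun_prop),
    lintegral_mul_eq_lintegral_mul_lintegral_of_indepFun'' (by fun_prop) (by fun_prop) hind,
    ← lintegral_map (f := fun x => ENNReal.ofReal (exp (-(r * a * x)))) (by fun_prop) hL,
    ← lintegral_map (f := fun x => ENNReal.ofReal (exp (-(r * b * x ^ 2)))) (by fun_prop) hW,
    hlawL, hlawW, lintegral_exp_neg_mul_expMeasure hrL (by positivity),
    lintegral_exp_neg_mul_sq_expMeasure hrW (by positivity), ← ENNReal.ofReal_mul (by positivity),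
    ← ENNReal.ofReal_mul (exp_pos _).le, ENNReal.toReal_ofReal]
  · ring
  · have := erfc_nonneg (rW / (2 * √(r * b)))
    positivity

lemma ProbabilityTheory.iIndepFun.indepFun_prodMk₃_prodMk {ι β : Type*} [DecidableEq ι]
    [MeasurableSpace β] {f : ι → Ω → β} (h : iIndepFun f P) (hf : ∀ i, Measurable (f i))
    {i j k l m : ι} (hdisj : Disjoint ({i, j, k} : Finset ι) {l, m}) :
    IndepFun (fun ω => (f i ω, f j ω, f k ω)) (fun ω => (f l ω, f m ω)) P :=
  (h.indepFun_finset _ _ hdisj hf).comp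
    (φ := fun v => (v ⟨i, by simp⟩, v ⟨j, by simp⟩, v ⟨k, by simp⟩))
    (ψ := fun v => (v ⟨l, by simp⟩, v ⟨m, by simp⟩))
    ((measurable_pi_apply _).prodMk ((measurable_pi_apply _).prodMk (measurable_pi_apply _)))
    ((measurable_pi_apply _).prodMk (measurable_pi_apply _))

lemma measureReal_inter_add_measureReal_compl_inter_inter [IsProbabilityMeasure P]
    {α β γ : Type*} [MeasurableSpace α] [MeasurableSpace β] [MeasurableSpace γ]
    {X : Ω → α} {Y : Ω → β} {Z : Ω → γ} (hX : Measurable X) (hZ : Measurable Z)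
    (hXZY : IndepFun X (fun ω => (Z ω, Y ω)) P) (hZY : IndepFun Z Y P)
    {s : Set α} {t : Set β} {u : Set γ} (hs : MeasurableSet s) (ht : MeasurableSet t)
    (hu : MeasurableSet u) :
    P.real (X ⁻¹' s ∩ Y ⁻¹' t) + P.real (X ⁻¹' sᶜ ∩ (Z ⁻¹' u ∩ Y ⁻¹' t))
      = P.real (Y ⁻¹' t) * (1 - P.real (X ⁻¹' sᶜ) * P.real (Z ⁻¹' uᶜ)) := by
  have hXY : IndepFun X Y P := hXZY.comp measurable_id measurable_snd
  have hF : P.real (X ⁻¹' s ∩ Y ⁻¹' t) = P.real (X ⁻¹' s) * P.real (Y ⁻¹' t) := by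
    simp only [measureReal_def, hXY.measure_inter_preimage_eq_mul _ _ hs ht, ENNReal.toReal_mul]
  have hG : P.real (X ⁻¹' sᶜ ∩ (Z ⁻¹' u ∩ Y ⁻¹' t))
      = P.real (X ⁻¹' sᶜ) * (P.real (Z ⁻¹' u) * P.real (Y ⁻¹' t)) := by
    simp only [measureReal_def, ← hZY.measure_inter_preimage_eq_mul _ _ hu ht,
      ← ENNReal.toReal_mul]
    exact congrArg _ (hXZY.measure_inter_preimage_eq_mul _ _ hs.compl (hu.prod ht))
  rw [hF, hG, preimage_compl, preimage_compl, probReal_compl_eq_one_sub (hX hs),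
    probReal_compl_eq_one_sub (hZ hu)]
  ring

end Probability

lemma min_div_lt_one_iff_lt_max_mul {af an γ γf γn s I : ℝ} (hγ : 0 < γ) (han : 0 < an)
    (hγf : 0 < γf) (hγn : 0 < γn) (hgap : 0 < af - an * γf) (hs : 0 ≤ s) (hI : 0 < I) :
    min (af * s * γ / (an * s * γ + I) / γf) (an * s * γ / I / γn) < 1
      ↔ s < max (γf / ((af - an * γf) * γ)) (γn / (an * γ)) * I := by
  have hD : 0 < an * s * γ + I := by positivity
  have hfar : af * s * γ / (an * s * γ + I) / γf < 1 ↔ s < γf / ((af - an * γf) * γ) * I := by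
    rw [div_lt_one hγf, div_lt_iff₀ hD, div_mul_eq_mul_div, lt_div_iff₀ (by positivity)]
    constructor <;> intro h <;> nlinarith
  have hnear : an * s * γ / I / γn < 1 ↔ s < γn / (an * γ) * I := by
    rw [div_lt_one hγn, div_lt_iff₀ hI, div_mul_eq_mul_div, lt_div_iff₀ (by positivity)]
    constructor <;> intro h <;> nlinarith
  rw [min_lt_iff, hfar, hnear, max_mul_of_nonneg _ _ hI.le, lt_max_iff]

lemma min_div_lt_one_iff_lt_max {af an γ γf γn s : ℝ} (hγ : 0 < γ) (han : 0 < an)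
    (hγf : 0 < γf) (hγn : 0 < γn) (hgap : 0 < af - an * γf) (hs : 0 ≤ s) :
    min (af * s * γ / (an * s * γ + 1) / γf) (an * s * γ / γn) < 1
      ↔ s < max (γf / ((af - an * γf) * γ)) (γn / (an * γ)) := by
  simpa only [div_one, mul_one] using
    min_div_lt_one_iff_lt_max_mul hγ han hγf hγn hgap hs one_pos

lemma relay_outage_term_eq_closed_form {βSR βRR βLI βRDn γr δ w θ φ : ℝ} (hβSR : 0 < βSR)
    (hβRR : 0 < βRR) (hβLI : 0 < βLI) (hβRDn : 0 < βRDn) (hγr : 0 < γr) (hδ : 0 < δ)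
    (hw : 0 ≤ w) (hθ : 0 < θ) :
    exp (-(1 / βSR * θ)) * (1 / βLI / (1 / βLI + 1 / βSR * (θ * w * γr)))
        * (1 / βRR * √π / (2 * √(1 / βSR * (θ * δ * γr)))
          * exp ((1 / βRR) ^ 2 / (4 * (1 / βSR * (θ * δ * γr))))
          * erfc (1 / βRR / (2 * √(1 / βSR * (θ * δ * γr))))) * exp (-(1 / βRDn * φ))
      = βSR / (2 * βRR * (βSR + βLI * w * γr * θ)) * √(π * βSR / (δ * γr * θ))
          * exp (βSR / (4 * βRR ^ 2 * δ * γr * θ) - θ / βSR - φ / βRDn)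
          * erfc (1 / (2 * βRR) * √(βSR / (δ * γr * θ))) := by
  set q := √(βSR / (δ * γr * θ))
  have hq : 0 < q := by positivity
  have hsqrt : √(1 / βSR * (θ * δ * γr)) = q⁻¹ := by
    rw [← sqrt_inv]
    congr 1
    field_simp
  have hsqrt_pi : √(π * βSR / (δ * γr * θ)) = √π * q := by
    rw [mul_div_assoc, sqrt_mul pi_pos.le]
  have hexp : exp (βSR / (4 * βRR ^ 2 * δ * γr * θ) - θ / βSR - φ / βRDn)
      = exp (-(1 / βSR * θ)) * exp ((1 / βRR) ^ 2 / (4 * (1 / βSR * (θ * δ * γr))))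
        * exp (-(1 / βRDn * φ)) := by
    rw [← exp_add, ← exp_add]
    congr 1
    field_simp
    ring
  have harg : 1 / βRR / (2 * q⁻¹) = 1 / (2 * βRR) * q := by
    field_simp
  rw [hexp, hsqrt, hsqrt_pi, harg]
  field_simp

theorem outage_probability_near_device_general
    {Ω : Type*} [MeasurableSpace Ω] (P : Measure Ω) [IsProbabilityMeasure P]
    (βSR βRR βLI βSDn βRDn : ℝ)
    (hβSR : 0 < βSR) (hβRR : 0 < βRR) (hβLI : 0 < βLI) (hβSDn : 0 < βSDn) (hβRDn : 0 < βRDn)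
    (rSR rSDn rRDn rLI V : Ω → ℝ)
    (hrSR : Measurable rSR) (hrSDn : Measurable rSDn) (hrRDn : Measurable rRDn)
    (hrLI : Measurable rLI) (hV : Measurable V)
    (hlawSR : Measure.map rSR P = expMeasure (1 / βSR))
    (hlawSDn : Measure.map rSDn P = expMeasure (1 / βSDn))
    (hlawRDn : Measure.map rRDn P = expMeasure (1 / βRDn))
    (hlawLI : Measure.map rLI P = expMeasure (1 / βLI))
    (hlawV : Measure.map V P = expMeasure (1 / βRR))
    (hindep : iIndepFun ![rSR, rSDn, rRDn, rLI, V] P)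
    (γc γr δ w an af γthf γthn : ℝ)
    (hγc : 0 < γc) (hγr : 0 < γr) (hδ : δ ∈ Set.Ioc (0 : ℝ) 1) (hw : w = 0 ∨ w = 1)
    (han : 0 < an)
    (hγthf : 0 < γthf) (hγthn : 0 < γthn) (hdec : an * γthf < af)
    -- threshold constants
    (θ₁ θ₂ θ φ₁ φ₂ φ : ℝ)
    (hθ₁ : θ₁ = γthf / ((af - an * γthf) * γc)) (hθ₂ : θ₂ = γthn / (an * γc))
    (hθ : θ = max θ₁ θ₂)
    (hφ₁ : φ₁ = γthf / ((af - an * γthf) * γr)) (hφ₂ : φ₂ = γthn / (an * γr))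
    (hφ : φ = max φ₁ φ₂) :
    -- with I ω = (V ω)² δ γr + rLI ω w γr + 1 :
    -- γ₁ = af rSR γc/(an rSR γc + I), γ₂ = an rSR γc/I,
    -- γ₃ = af rSDn γc/(an rSDn γc + 1), γ₄ = an rSDn γc,
    -- γ₅ = af rRDn γr/(an rRDn γr + 1), γ₆ = an rRDn γr
    P {ω | min (af * rSR ω * γc /
                  (an * rSR ω * γc + ((V ω) ^ 2 * δ * γr + rLI ω * w * γr + 1)) / γthf)
               (an * rSR ω * γc / ((V ω) ^ 2 * δ * γr + rLI ω * w * γr + 1) / γthn) < 1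
         ∧ min (af * rSDn ω * γc / (an * rSDn ω * γc + 1) / γthf)
               (an * rSDn ω * γc / γthn) < 1}
      + P {ω | 1 ≤ min (af * rSR ω * γc /
                  (an * rSR ω * γc + ((V ω) ^ 2 * δ * γr + rLI ω * w * γr + 1)) / γthf)
               (an * rSR ω * γc / ((V ω) ^ 2 * δ * γr + rLI ω * w * γr + 1) / γthn)
             ∧ min (af * rRDn ω * γr / (an * rRDn ω * γr + 1) / γthf)
                   (an * rRDn ω * γr / γthn) < 1
             ∧ min (af * rSDn ω * γc / (an * rSDn ω * γc + 1) / γthf)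
                   (an * rSDn ω * γc / γthn) < 1}
      = ENNReal.ofReal ((1 - Real.exp (-θ / βSDn))
          * (1 - βSR / (2 * βRR * (βSR + βLI * w * γr * θ))
              * Real.sqrt (π * βSR / (δ * γr * θ))
              * Real.exp (βSR / (4 * βRR ^ 2 * δ * γr * θ) - θ / βSR - φ / βRDn)
              * erfc (1 / (2 * βRR) * Real.sqrt (βSR / (δ * γr * θ))))) := by
  obtain ⟨hδ0, -⟩ := hδ
  have hw0 : 0 ≤ w := by rcases hw with rfl | rfl <;> norm_num
  have hgap : 0 < af - an * γthf := sub_pos.2 hdec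
  subst hθ₁ hθ₂ hφ₁ hφ₂
  have hθ0 : 0 < θ := hθ ▸ lt_max_of_lt_left (by positivity)
  have hφ0 : 0 < φ := hφ ▸ lt_max_of_lt_left (by positivity)
  have hmeas : ∀ i, Measurable (![rSR, rSDn, rRDn, rLI, V] i) := by
    intro i; fin_cases i <;> assumption
  -- outage events: `X ⁻¹' s` at the relay, `rSDn ⁻¹' Iio θ` and `rRDn ⁻¹' Iio φ` at `D_n`
  set X : Ω → ℝ × ℝ × ℝ := fun ω => (rSR ω, rLI ω, V ω)
  set s : Set (ℝ × ℝ × ℝ) := {p | p.1 < θ * (p.2.2 ^ 2 * δ * γr + p.2.1 * w * γr + 1)}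
  have hindep_relay_direct : IndepFun X (fun ω => (rRDn ω, rSDn ω)) P :=
    hindep.indepFun_prodMk₃_prodMk hmeas (i := 0) (j := 3) (k := 4) (l := 2) (m := 1) (by decide)
  have hindep_RDn_SDn : IndepFun rRDn rSDn P := hindep.indepFun (by decide : (2 : Fin 5) ≠ 1)
  have hindep_LV_SR : IndepFun (fun ω => (rLI ω, V ω)) rSR P :=
    hindep.indepFun_prodMk hmeas 3 4 0 (by decide) (by decide)
  have hindep_LI_V : IndepFun rLI V P := hindep.indepFun (by decide : (3 : Fin 5) ≠ 4)
  have hs : MeasurableSet s := measurableSet_lt (by fun_prop) (by fun_prop)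
  have hrelay_compl :
      X ⁻¹' sᶜ = {ω | θ + θ * w * γr * rLI ω + θ * δ * γr * V ω ^ 2 ≤ rSR ω} := by
    ext ω
    simp only [X, s, mem_preimage, mem_compl_iff, mem_ofPred_eq, not_lt]
    ring_nf
  calc P _ + P _ = P (X ⁻¹' s ∩ rSDn ⁻¹' Iio θ)
        + P (X ⁻¹' sᶜ ∩ (rRDn ⁻¹' Iio φ ∩ rSDn ⁻¹' Iio θ)) := by
        congr 1 <;> refine measure_congr (Filter.eventuallyEq_set.2 ?_) <;>
          filter_upwards [ae_nonneg_of_map_eq_expMeasure hrSR (by positivity) hlawSR,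
            ae_nonneg_of_map_eq_expMeasure hrSDn (by positivity) hlawSDn,
            ae_nonneg_of_map_eq_expMeasure hrRDn (by positivity) hlawRDn,
            ae_nonneg_of_map_eq_expMeasure hrLI (by positivity) hlawLI] with ω hSR hSDn hRDn hLI
        all_goals
          have hI : 0 < V ω ^ 2 * δ * γr + rLI ω * w * γr + 1 := by positivity
          simp only [X, s, mem_ofPred_eq, mem_inter_iff, mem_preimage, mem_compl_iff, mem_Iio,
            ← not_lt, min_div_lt_one_iff_lt_max_mul hγc han hγthf hγthn hgap hSR hI,
            min_div_lt_one_iff_lt_max hγc han hγthf hγthn hgap hSDn,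
            min_div_lt_one_iff_lt_max hγr han hγthf hγthn hgap hRDn, ← hθ, ← hφ]
    _ = ENNReal.ofReal (P.real (rSDn ⁻¹' Iio θ)
          * (1 - P.real (X ⁻¹' sᶜ) * P.real (rRDn ⁻¹' (Iio φ)ᶜ))) := by
        rw [← measureReal_inter_add_measureReal_compl_inter_inter (hrSR.prodMk (hrLI.prodMk hV))
          hrRDn hindep_relay_direct hindep_RDn_SDn hs measurableSet_Iio measurableSet_Iio,
          ENNReal.ofReal_add measureReal_nonneg measureReal_nonneg, ofReal_measureReal,
          ofReal_measureReal]
    _ = _ := by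
        rw [hrelay_compl, measureReal_add_mul_add_mul_sq_le hrSR hrLI hV hindep_LV_SR hindep_LI_V
            (by positivity) (by positivity) (by positivity) hlawSR hlawLI hlawV hθ0.le
            (by positivity) (by positivity),
          ← map_measureReal_apply hrSDn measurableSet_Iio, hlawSDn,
          expMeasure_real_Iio (by positivity) hθ0.le, compl_Iio,
          ← map_measureReal_apply hrRDn measurableSet_Ici, hlawRDn,
          expMeasure_real_Ici (by positivity) hφ0.le, show -(1 / βSDn * θ) = -θ / βSDn by ring,
          relay_outage_term_eq_closed_form hβSR hβRR hβLI hβRDn hγr hδ0 hw0 hθ0]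

/-- **Theorem 2: exact outage probability of the near IoT device `D_n`.** -/
theorem outage_probability_near_device
    {Ω : Type*} [MeasurableSpace Ω] (P : Measure Ω) [IsProbabilityMeasure P]
    (βSR βRR βLI βSDn βRDn : ℝ)
    (hβSR : 0 < βSR) (hβRR : 0 < βRR) (hβLI : 0 < βLI) (hβSDn : 0 < βSDn) (hβRDn : 0 < βRDn)
    (rSR rSDn rRDn rLI V : Ω → ℝ)
    (hrSR : Measurable rSR) (hrSDn : Measurable rSDn) (hrRDn : Measurable rRDn)
    (hrLI : Measurable rLI) (hV : Measurable V)
    (hlawSR : Measure.map rSR P = expMeasure (1 / βSR))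
    (hlawSDn : Measure.map rSDn P = expMeasure (1 / βSDn))
    (hlawRDn : Measure.map rRDn P = expMeasure (1 / βRDn))
    (hlawLI : Measure.map rLI P = expMeasure (1 / βLI))
    (hlawV : Measure.map V P = expMeasure (1 / βRR))
    (hindep : iIndepFun ![rSR, rSDn, rRDn, rLI, V] P)
    (γc γr δ w an af γthf γthn : ℝ)
    (hγc : 0 < γc) (hγr : 0 < γr) (hδ : δ ∈ Set.Ioc (0 : ℝ) 1) (hw : w = 0 ∨ w = 1)
    (han : 0 < an) (hanf : an < af) (hsum : an + af = 1)
    (hγthf : 0 < γthf) (hγthn : 0 < γthn) (hdec : an * γthf < af)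
    -- threshold constants
    (θ₁ θ₂ θ φ₁ φ₂ φ : ℝ)
    (hθ₁ : θ₁ = γthf / ((af - an * γthf) * γc)) (hθ₂ : θ₂ = γthn / (an * γc))
    (hθ : θ = max θ₁ θ₂)
    (hφ₁ : φ₁ = γthf / ((af - an * γthf) * γr)) (hφ₂ : φ₂ = γthn / (an * γr))
    (hφ : φ = max φ₁ φ₂) :
    -- with I ω = (V ω)² δ γr + rLI ω w γr + 1 :
    -- γ₁ = af rSR γc/(an rSR γc + I), γ₂ = an rSR γc/I,
    -- γ₃ = af rSDn γc/(an rSDn γc + 1), γ₄ = an rSDn γc,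
    -- γ₅ = af rRDn γr/(an rRDn γr + 1), γ₆ = an rRDn γr
    P {ω | min (af * rSR ω * γc /
                  (an * rSR ω * γc + ((V ω) ^ 2 * δ * γr + rLI ω * w * γr + 1)) / γthf)
               (an * rSR ω * γc / ((V ω) ^ 2 * δ * γr + rLI ω * w * γr + 1) / γthn) < 1
         ∧ min (af * rSDn ω * γc / (an * rSDn ω * γc + 1) / γthf)
               (an * rSDn ω * γc / γthn) < 1}
      + P {ω | 1 ≤ min (af * rSR ω * γc /
                  (an * rSR ω * γc + ((V ω) ^ 2 * δ * γr + rLI ω * w * γr + 1)) / γthf)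
               (an * rSR ω * γc / ((V ω) ^ 2 * δ * γr + rLI ω * w * γr + 1) / γthn)
             ∧ min (af * rRDn ω * γr / (an * rRDn ω * γr + 1) / γthf)
                   (an * rRDn ω * γr / γthn) < 1
             ∧ min (af * rSDn ω * γc / (an * rSDn ω * γc + 1) / γthf)
                   (an * rSDn ω * γc / γthn) < 1}
      = ENNReal.ofReal ((1 - Real.exp (-θ / βSDn))
          * (1 - βSR / (2 * βRR * (βSR + βLI * w * γr * θ))
              * Real.sqrt (π * βSR / (δ * γr * θ))
              * Real.exp (βSR / (4 * βRR ^ 2 * δ * γr * θ) - θ / βSR - φ / βRDn)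
              * erfc (1 / (2 * βRR) * Real.sqrt (βSR / (δ * γr * θ))))) :=
  outage_probability_near_device_general P βSR βRR βLI βSDn βRDn hβSR hβRR hβLI hβSDn hβRDn rSR rSDn
    rRDn rLI V hrSR hrSDn hrRDn hrLI hV hlawSR hlawSDn hlawRDn hlawLI hlawV hindep γc γr δ w an af
    γthf γthn hγc hγr hδ hw han hγthf hγthn hdec θ₁ θ₂ θ φ₁ φ₂ φ hθ₁ hθ₂ hθ hφ₁ hφ₂ hφ
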